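/- arXiv:math/0503553 — 3 statements merged into one kernel-verified Lean document; each statement's English description precedes it below -/
import Mathlib

section
/- For every n, the edges of the complete graph K_n with vertices placed in convex position (say, on a circle in the natural cyclic order 1, 2, ..., n) can be partitioned into ⌈n/2⌉ classes such that no two edges in the same class cross; explicitly, colouring edge {a,b} with colour 1 + ⌊((a+b) mod n)/2⌋ when n is even yields n/2 non-crossing classes, each a Hamiltonian path (zig-zag). Hence the book thickness of K_n is at most ⌈n/2⌉. -/
/-- Core arithmetic fact: if `a < x < b < y < m`, then edges `{a,b}` and `{x,y}` get
different colours under the colouring `e ↦ ⌊((sum of endpoints) mod m)/2⌋`. -/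
lemma book_core (m a b x y : ℕ) (hax : a < x) (hxb : x < b) (hby : b < y) (hym : y < m)
    (h : ((a + b) % m) / 2 = ((x + y) % m) / 2) : False := by
  have hm : 0 < m := by omega
  have e1 := Nat.div_add_mod (a + b) m
  have e2 := Nat.div_add_mod (x + y) m
  have l1 : (a + b) % m < m := Nat.mod_lt _ hm
  have l2 : (x + y) % m < m := Nat.mod_lt _ hm
  have d1 : (a + b) / m < 2 := Nat.div_lt_of_lt_mul (by omega)
  have d2 : (x + y) / m < 2 := Nat.div_lt_of_lt_mul (by omega)
  interval_cases h1 : (a + b) / m <;> interval_cases h2 : (x + y) / m <;> omega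

/-- With the vertices of `K_n` in convex position in the natural cyclic order, the edges
can be partitioned into `⌈n/2⌉` noncrossing classes; explicitly, for even `n`, colouring
edge `{a,b}` by `⌊((a+b) mod n)/2⌋` yields `n/2` noncrossing classes. -/
theorem completeGraph_book_thickness_upper (n : ℕ) :
    (∃ c : Sym2 (Fin n) → Fin ((n + 1) / 2),
      ∀ a b x y : Fin n, a ≠ b → x ≠ y → c s(a, b) = c s(x, y) →
        ¬ (a < x ∧ x < b ∧ b < y)) ∧
    (n % 2 = 0 →
      (∀ a b x y : Fin n, a ≠ b → x ≠ y →
        ((a.val + b.val) % n) / 2 = ((x.val + y.val) % n) / 2 →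
        ¬ (a < x ∧ x < b ∧ b < y)) ∧
      ∀ a b : Fin n, a ≠ b → ((a.val + b.val) % n) / 2 < n / 2) := by
  constructor
  · -- general part, lift to even m = 2 * ⌈n/2⌉
    rcases Nat.eq_zero_or_pos n with hn | hn
    · subst hn
      refine ⟨Sym2.lift ⟨fun a _ => a.elim0, fun a _ => a.elim0⟩, fun a => a.elim0⟩
    · set m := 2 * ((n + 1) / 2) with hm
      have hnm : n ≤ m := by omega
      have hmpos : 0 < m := by omega
      refine ⟨Sym2.lift ⟨fun a b => ⟨((a.val + b.val) % m) / 2, ?_⟩, fun a b => by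
        simp [Nat.add_comm]⟩, ?_⟩
      · have := Nat.mod_lt (a.val + b.val) hmpos
        omega
      · intro a b x y hab hxy hc ⟨h1, h2, h3⟩
        simp only [Sym2.lift_mk, Fin.mk.injEq] at hc
        exact book_core m a.val b.val x.val y.val h1 h2 h3 (by omega) hc
  · intro hpar
    constructor
    · intro a b x y hab hxy hc ⟨h1, h2, h3⟩
      exact book_core n a.val b.val x.val y.val h1 h2 h3 y.isLt hc
    · intro a b hab
      have hn : 0 < n := a.pos
      have := Nat.mod_lt (a.val + b.val) hn
      omega
end

section
/- The book thickness of the complete graph K_n equals ⌈n/2⌉. In particular, for any cyclic ordering of the n vertices on a circle, the edges of K_n cannot be partitioned into fewer than ⌈n/2⌉ classes of pairwise non-crossing chords. -/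
/-- Pairwise noncrossing intervals of length ≥ 2 inside `[a,b]`:
at most `b-a-1` of them, and at most `b-a-2` if `(a,b)` itself is absent. -/
lemma nc_key (F : Finset (ℕ × ℕ))
    (hlen : ∀ p ∈ F, p.1 + 2 ≤ p.2)
    (hnc : ∀ p ∈ F, ∀ q ∈ F, ¬(p.1 < q.1 ∧ q.1 < p.2 ∧ p.2 < q.2)) :
    ∀ k a b, b - a ≤ k → a < b →
      ((F.filter fun p => a ≤ p.1 ∧ p.2 ≤ b).card ≤ b - a - 1 ∧
       ((a, b) ∉ F → (F.filter fun p => a ≤ p.1 ∧ p.2 ≤ b).card ≤ b - a - 2)) := by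
  intro k
  induction k with
  | zero => intro a b hk hab; omega
  | succ k ih =>
    intro a b hk hab
    by_cases hb1 : b ≤ a + 1
    · have hS : (F.filter fun p => a ≤ p.1 ∧ p.2 ≤ b) = ∅ := by
        apply Finset.eq_empty_of_forall_notMem
        intro p hp
        rw [Finset.mem_filter] at hp
        have := hlen p hp.1
        omega
      rw [hS]
      simp
    · push_neg at hb1
      by_cases hR : (F.filter fun p => p.1 = a ∧ p.2 ≤ b ∧ p.2 ≠ b).Nonempty
      · set R := F.filter fun p => p.1 = a ∧ p.2 ≤ b ∧ p.2 ≠ b with hRdef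
        have hRimg : (R.image Prod.snd).Nonempty := hR.image _
        set cc := (R.image Prod.snd).max' hRimg with hccdef
        have hccmem : cc ∈ R.image Prod.snd := (R.image Prod.snd).max'_mem hRimg
        rw [Finset.mem_image] at hccmem
        obtain ⟨p0, hp0R, hp0c⟩ := hccmem
        rw [hRdef, Finset.mem_filter] at hp0R
        have hp0eq : p0 = (a, cc) := by
          obtain ⟨h1, h2, h3, h4⟩ := hp0R
          exact Prod.ext h2 hp0c
        have haccF : (a, cc) ∈ F := hp0eq ▸ hp0R.1
        have hacc : a + 2 ≤ cc := hlen _ haccF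
        have hccb : cc < b := by
          obtain ⟨h1, h2, h3, h4⟩ := hp0R
          omega
        have hmax : ∀ p ∈ R, p.2 ≤ cc :=
          fun p hp => (R.image Prod.snd).le_max' _ (Finset.mem_image_of_mem _ hp)
        have h1 := ih a cc (by omega) (by omega)
        have h2 := ih cc b (by omega) (by omega)
        have hsub : (F.filter fun p => a ≤ p.1 ∧ p.2 ≤ b) ⊆
            insert (a, b) ((F.filter fun p => a ≤ p.1 ∧ p.2 ≤ cc) ∪
              (F.filter fun p => cc ≤ p.1 ∧ p.2 ≤ b)) := by
          intro p hp
          rw [Finset.mem_filter] at hp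
          obtain ⟨hpF, hpa, hpb⟩ := hp
          rw [Finset.mem_insert, Finset.mem_union, Finset.mem_filter, Finset.mem_filter]
          by_cases hpab : p = (a, b)
          · exact Or.inl hpab
          · right
            by_cases hp1 : p.1 = a
            · have hpR : p ∈ R := by
                rw [hRdef, Finset.mem_filter]
                refine ⟨hpF, hp1, hpb, ?_⟩
                intro h
                exact hpab (Prod.ext hp1 h)
              exact Or.inl ⟨hpF, hpa, hmax p hpR⟩
            · have hap1 : a < p.1 := by omega
              have := hnc (a, cc) haccF p hpF
              simp only at this
              by_cases hpc : p.2 ≤ cc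
              · exact Or.inl ⟨hpF, hpa, hpc⟩
              · push_neg at hpc
                have : cc ≤ p.1 := by
                  by_contra hcp
                  push_neg at hcp
                  exact this ⟨hap1, hcp, hpc⟩
                exact Or.inr ⟨hpF, this, hpb⟩
        have hcard : (F.filter fun p => a ≤ p.1 ∧ p.2 ≤ b).card ≤
            1 + ((F.filter fun p => a ≤ p.1 ∧ p.2 ≤ cc).card +
              (F.filter fun p => cc ≤ p.1 ∧ p.2 ≤ b).card) := by
          calc (F.filter fun p => a ≤ p.1 ∧ p.2 ≤ b).card
              ≤ (insert (a, b) ((F.filter fun p => a ≤ p.1 ∧ p.2 ≤ cc) ∪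
                (F.filter fun p => cc ≤ p.1 ∧ p.2 ≤ b))).card := Finset.card_le_card hsub
            _ ≤ ((F.filter fun p => a ≤ p.1 ∧ p.2 ≤ cc) ∪
                (F.filter fun p => cc ≤ p.1 ∧ p.2 ≤ b)).card + 1 := Finset.card_insert_le _ _
            _ ≤ ((F.filter fun p => a ≤ p.1 ∧ p.2 ≤ cc).card +
                (F.filter fun p => cc ≤ p.1 ∧ p.2 ≤ b).card) + 1 := by
                  exact Nat.add_le_add_right (Finset.card_union_le _ _) 1
            _ = _ := by omega
        constructor
        · have := h1.1; have := h2.1; omega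
        · intro habF
          have hsub2 : (F.filter fun p => a ≤ p.1 ∧ p.2 ≤ b) ⊆
              ((F.filter fun p => a ≤ p.1 ∧ p.2 ≤ cc) ∪
                (F.filter fun p => cc ≤ p.1 ∧ p.2 ≤ b)) := by
            intro p hp
            have hmem := hsub hp
            rw [Finset.mem_insert] at hmem
            rcases hmem with h | h
            · exfalso
              rw [Finset.mem_filter] at hp
              exact habF (h ▸ hp.1)
            · exact h
          have hcard2 := Finset.card_le_card hsub2
          have hcard3 := Finset.card_union_le (F.filter fun p => a ≤ p.1 ∧ p.2 ≤ cc)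
            (F.filter fun p => cc ≤ p.1 ∧ p.2 ≤ b)
          have := h1.1; have := h2.1; omega
      · -- no interval starts at a (other than possibly (a,b))
        have hsub : (F.filter fun p => a ≤ p.1 ∧ p.2 ≤ b) ⊆
            insert (a, b) (F.filter fun p => a + 1 ≤ p.1 ∧ p.2 ≤ b) := by
          intro p hp
          rw [Finset.mem_filter] at hp
          obtain ⟨hpF, hpa, hpb⟩ := hp
          rw [Finset.mem_insert, Finset.mem_filter]
          by_cases hpab : p = (a, b)
          · exact Or.inl hpab
          · right
            refine ⟨hpF, ?_, hpb⟩
            rcases Nat.lt_or_ge a p.1 with h | h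
            · omega
            · exfalso
              have hp1 : p.1 = a := by omega
              apply hR
              refine ⟨p, ?_⟩
              rw [Finset.mem_filter]
              refine ⟨hpF, hp1, hpb, fun h2 => hpab (Prod.ext hp1 h2)⟩
        have h1 := ih (a + 1) b (by omega) (by omega)
        have hcard : (F.filter fun p => a ≤ p.1 ∧ p.2 ≤ b).card ≤
            (F.filter fun p => a + 1 ≤ p.1 ∧ p.2 ≤ b).card + 1 :=
          le_trans (Finset.card_le_card hsub) (Finset.card_insert_le _ _)
        constructor
        · have := h1.1; omega
        · intro habF
          have hsub2 : (F.filter fun p => a ≤ p.1 ∧ p.2 ≤ b) ⊆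
              (F.filter fun p => a + 1 ≤ p.1 ∧ p.2 ≤ b) := by
            intro p hp
            have hmem := hsub hp
            rw [Finset.mem_insert] at hmem
            rcases hmem with h | h
            · exfalso
              rw [Finset.mem_filter] at hp
              exact habF (h ▸ hp.1)
            · exact h
          have := Finset.card_le_card hsub2
          have := h1.1; omega

/-- The number of pairs `(x, y)` with `x + 2 ≤ y` and `x, y < m` is `(m-1)(m-2)/2`. -/

lemma count_pairs : ∀ m : ℕ,
    (((Finset.range m ×ˢ Finset.range m).filter fun p => p.1 + 2 ≤ p.2).card) * 2
      = (m - 1) * (m - 2) := by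
  intro m
  induction m with
  | zero => simp
  | succ m ih =>
    have hset : ((Finset.range (m + 1) ×ˢ Finset.range (m + 1)).filter
          fun p => p.1 + 2 ≤ p.2)
        = ((Finset.range m ×ˢ Finset.range m).filter fun p => p.1 + 2 ≤ p.2)
          ∪ (Finset.range (m - 1)).image (fun x => (x, m)) := by
      ext ⟨p1, p2⟩
      simp only [Finset.mem_filter, Finset.mem_product, Finset.mem_range,
        Finset.mem_union, Finset.mem_image, Prod.mk.injEq]
      constructor
      · rintro ⟨⟨h1, h2⟩, h3⟩
        by_cases hpm : p2 = m
        · right; exact ⟨p1, by omega, rfl, hpm.symm⟩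
        · left; exact ⟨⟨by omega, by omega⟩, h3⟩
      · rintro (⟨⟨h1, h2⟩, h3⟩ | ⟨x, hx, rfl, rfl⟩)
        · exact ⟨⟨by omega, by omega⟩, h3⟩
        · exact ⟨⟨by omega, by omega⟩, by omega⟩
    have hdisj : Disjoint ((Finset.range m ×ˢ Finset.range m).filter
        fun p => p.1 + 2 ≤ p.2) ((Finset.range (m - 1)).image (fun x => (x, m))) := by
      rw [Finset.disjoint_left]
      rintro ⟨p1, p2⟩ hp hq
      simp only [Finset.mem_filter, Finset.mem_product, Finset.mem_range] at hp
      simp only [Finset.mem_image, Prod.mk.injEq] at hq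
      obtain ⟨x, hx, rfl, rfl⟩ := hq
      omega
    have hinj : Function.Injective (fun x : ℕ => (x, m)) := by
      intro x y h
      simpa using h
    have hcard : ((Finset.range (m + 1) ×ˢ Finset.range (m + 1)).filter
          fun p => p.1 + 2 ≤ p.2).card
        = ((Finset.range m ×ˢ Finset.range m).filter fun p => p.1 + 2 ≤ p.2).card
          + (m - 1) := by
      rw [hset, Finset.card_union_of_disjoint hdisj, Finset.card_image_of_injective _ hinj,
        Finset.card_range]
    rw [hcard]
    set x := ((Finset.range m ×ˢ Finset.range m).filter fun p => p.1 + 2 ≤ p.2).card with hx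
    rcases m with _ | m
    · simp at ih ⊢; omega
    rcases m with _ | m
    · simp at ih ⊢; omega
    have e1 : (m + 1 + 1 + 1 - 1) * (m + 1 + 1 + 1 - 2) = (m + 2) * (m + 1) := by
      simp [Nat.succ_sub_one]
    have e2 : (m + 1 + 1 - 1) * (m + 1 + 1 - 2) = (m + 1) * m := by
      simp [Nat.succ_sub_one]
    rw [e2] at ih
    rw [e1]
    have e3 : (m + 2) * (m + 1) = (m + 1) * m + 2 * m + 2 := by ring
    rw [e3]
    have e4 : m + 1 + 1 - 1 = m + 1 := by omega
    rw [e4]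
    linarith [ih]


/-- The book thickness of `K_n` equals `⌈n/2⌉` (for `n ≥ 4`): the edges can be
partitioned into `⌈n/2⌉` classes of pairwise noncrossing chords, and for every cyclic
vertex ordering no partition into fewer noncrossing classes exists. -/
theorem completeGraph_book_thickness (n : ℕ) (hn : 4 ≤ n) :
    (∃ c : Sym2 (Fin n) → Fin ((n + 1) / 2),
      ∀ a b x y : Fin n, a ≠ b → x ≠ y → c s(a, b) = c s(x, y) →
        ¬ (a < x ∧ x < b ∧ b < y)) ∧
    (∀ (t : ℕ) (σ : Fin n ≃ Fin n) (c : Sym2 (Fin n) → Fin t),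
      (∀ a b x y : Fin n, a ≠ b → x ≠ y → c s(a, b) = c s(x, y) →
        ¬ (σ a < σ x ∧ σ x < σ b ∧ σ b < σ y)) →
      (n + 1) / 2 ≤ t) := by
  constructor
  · -- Upper bound: the zig-zag style colouring `((a + b) mod n) / 2`.
    have hn0 : 0 < n := by omega
    refine ⟨Sym2.lift ⟨fun a b => ⟨((a.val + b.val) % n) / 2, ?_⟩, ?_⟩, ?_⟩
    · have := Nat.mod_lt (a.val + b.val) hn0
      omega
    · intro a b
      simp [Nat.add_comm]
    · intro a b x y hab hxy hc
      rintro ⟨h1, h2, h3⟩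
      rw [Fin.lt_def] at h1 h2 h3
      simp only [Sym2.lift_mk, Fin.mk.injEq] at hc
      -- arithmetic contradiction
      set s := a.val + b.val with hs
      set u := x.val + y.val with hu
      have hyn : y.val < n := y.isLt
      have hsu : s + 2 ≤ u := by omega
      have hun : u + 2 ≤ s + n := by omega
      have es := Nat.div_add_mod s n
      have eu := Nat.div_add_mod u n
      set qs := s / n with hqs
      set rs := s % n with hrs
      set qu := u / n with hqu
      set ru := u % n with hru
      have hrsn : rs < n := Nat.mod_lt _ hn0
      have hrun : ru < n := Nat.mod_lt _ hn0
      have hnear : rs ≤ ru + 1 ∧ ru ≤ rs + 1 := by omega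
      have hq1 : qs < qu := by
        by_contra h
        push_neg at h
        have := Nat.mul_le_mul_left n h
        linarith [es, eu, hnear.1, hnear.2]
      have hq2 : n * (qs + 1) ≤ n * qu := Nat.mul_le_mul_left n hq1
      rw [Nat.mul_succ] at hq2
      linarith [es, eu, hnear.1, hnear.2]
  · -- Lower bound: counting internal diagonals.
    have hn0 : 0 < n := by omega
    intro t σ c H
    set color : ℕ × ℕ → Fin t := fun p =>
      c s(σ.symm ⟨p.1 % n, Nat.mod_lt _ hn0⟩, σ.symm ⟨p.2 % n, Nat.mod_lt _ hn0⟩) with hcolor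
    set S := (Finset.range n ×ˢ Finset.range n).filter (fun p => p.1 + 2 ≤ p.2) with hSdef
    set I := S.erase (0, n - 1) with hIdef
    have hmemS : (0, n - 1) ∈ S := by
      rw [hSdef, Finset.mem_filter, Finset.mem_product, Finset.mem_range, Finset.mem_range]
      omega
    have hScard : S.card * 2 = (n - 1) * (n - 2) := count_pairs n
    have hIcard : I.card * 2 = n * (n - 3) := by
      rw [hIdef, Finset.card_erase_of_mem hmemS]
      have hS1 : 1 ≤ S.card := Finset.card_pos.mpr ⟨_, hmemS⟩
      obtain ⟨k, rfl⟩ : ∃ k, n = k + 4 := ⟨n - 4, by omega⟩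
      have e1 : (k + 4 - 1) * (k + 4 - 2) = (k + 3) * (k + 2) := by
        rw [show k + 4 - 1 = k + 3 from by omega, show k + 4 - 2 = k + 2 from by omega]
      have e2 : (k + 4) * (k + 4 - 3) = (k + 4) * (k + 1) := by
        rw [show k + 4 - 3 = k + 1 from by omega]
      rw [e1] at hScard
      rw [e2]
      have e3 : (k + 3) * (k + 2) = (k + 4) * (k + 1) + 2 := by ring
      rw [e3] at hScard
      omega
    -- membership facts for elements of I
    have hImem : ∀ p ∈ I, p.1 < n ∧ p.2 < n ∧ p.1 + 2 ≤ p.2 ∧ p ≠ (0, n - 1) := by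
      intro p hp
      rw [hIdef, Finset.mem_erase, hSdef, Finset.mem_filter, Finset.mem_product,
        Finset.mem_range, Finset.mem_range] at hp
      exact ⟨hp.2.1.1, hp.2.1.2, hp.2.2, hp.1⟩
    have hfiber : I.card = ∑ i : Fin t, (I.filter fun p => color p = i).card :=
      Finset.card_eq_sum_card_fiberwise (fun p _ => Finset.mem_univ _)
    have hfiber_le : ∀ i : Fin t, (I.filter fun p => color p = i).card ≤ n - 3 := by
      intro i
      set Fi := I.filter (fun p => color p = i) with hFi
      have hFiI : ∀ p ∈ Fi, p ∈ I := fun p hp => (Finset.mem_filter.mp hp).1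
      have hlen : ∀ p ∈ Fi, p.1 + 2 ≤ p.2 := fun p hp => (hImem p (hFiI p hp)).2.2.1
      have hnc : ∀ p ∈ Fi, ∀ q ∈ Fi, ¬(p.1 < q.1 ∧ q.1 < p.2 ∧ p.2 < q.2) := by
        rintro p hp q hq ⟨h1, h2, h3⟩
        have hpI := hImem p (hFiI p hp)
        have hqI := hImem q (hFiI q hq)
        have hci : color p = color q := by
          have h1 := (Finset.mem_filter.mp hp).2
          have h2 := (Finset.mem_filter.mp hq).2
          rw [h1, h2]
        rw [hcolor] at hci
        simp only at hci
        have hmp1 : p.1 % n = p.1 := Nat.mod_eq_of_lt hpI.1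
        have hmp2 : p.2 % n = p.2 := Nat.mod_eq_of_lt hpI.2.1
        have hmq1 : q.1 % n = q.1 := Nat.mod_eq_of_lt hqI.1
        have hmq2 : q.2 % n = q.2 := Nat.mod_eq_of_lt hqI.2.1
        have hne1 : σ.symm ⟨p.1 % n, Nat.mod_lt _ hn0⟩ ≠ σ.symm ⟨p.2 % n, Nat.mod_lt _ hn0⟩ := by
          intro h
          have := σ.symm.injective h
          rw [Fin.mk.injEq] at this
          omega
        have hne2 : σ.symm ⟨q.1 % n, Nat.mod_lt _ hn0⟩ ≠ σ.symm ⟨q.2 % n, Nat.mod_lt _ hn0⟩ := by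
          intro h
          have := σ.symm.injective h
          rw [Fin.mk.injEq] at this
          omega
        have := H _ _ _ _ hne1 hne2 hci
        apply this
        refine ⟨?_, ?_, ?_⟩ <;>
          · rw [Equiv.apply_symm_apply, Equiv.apply_symm_apply, Fin.lt_def]
            simp only
            omega
      have hkey := (nc_key Fi hlen hnc (n - 1) 0 (n - 1) le_rfl (by omega)).2 ?_
      · have hfe : Fi.filter (fun p => 0 ≤ p.1 ∧ p.2 ≤ n - 1) = Fi := by
          apply Finset.filter_true_of_mem
          intro p hp
          have := hImem p (hFiI p hp)
          omega
        rw [hfe] at hkey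
        omega
      · intro hmem
        have := hImem _ (hFiI _ hmem)
        exact this.2.2.2 rfl
    have htotal : I.card ≤ t * (n - 3) := by
      rw [hfiber]
      calc ∑ i : Fin t, (I.filter fun p => color p = i).card
          ≤ ∑ _i : Fin t, (n - 3) := Finset.sum_le_sum (fun i _ => hfiber_le i)
        _ = t * (n - 3) := by
            rw [Finset.sum_const, Finset.card_univ, Fintype.card_fin, smul_eq_mul]
    have hfin : n * (n - 3) ≤ (2 * t) * (n - 3) := by
      calc n * (n - 3) = I.card * 2 := hIcard.symm
        _ ≤ (t * (n - 3)) * 2 := by omega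
        _ = (2 * t) * (n - 3) := by ring
    have hn3 : 0 < n - 3 := by omega
    have := Nat.le_of_mul_le_mul_right hfin hn3
    omega
end

section
/- Let P be a finite set of points in the plane. Then there exists ε > 0 such that the open discs of radius ε centred at the points of P are pairwise disjoint, and whenever a single line intersects the three discs centred at points u, v, w of P, the points u, v, w are themselves collinear. -/
noncomputable def det3 (x : (ℝ × ℝ) × (ℝ × ℝ) × (ℝ × ℝ)) : ℝ :=
  (x.2.1.1 - x.1.1) * (x.2.2.2 - x.1.2) - (x.2.1.2 - x.1.2) * (x.2.2.1 - x.1.1)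

theorem collinear_iff_det3 (p q r : ℝ × ℝ) :
    Collinear ℝ ({p, q, r} : Set (ℝ × ℝ)) ↔ det3 (p, q, r) = 0 := by
  rw [collinear_iff_of_mem (Set.mem_insert p _)]
  constructor
  · rintro ⟨v, hv⟩
    obtain ⟨a, ha⟩ := hv q (by simp)
    obtain ⟨b, hb⟩ := hv r (by simp)
    simp only [Prod.ext_iff, Prod.smul_fst, Prod.smul_snd] at ha hb
    obtain ⟨ha1, ha2⟩ := ha
    obtain ⟨hb1, hb2⟩ := hb
    simp only [det3, ha1, ha2, hb1, hb2, Prod.fst_vadd, Prod.snd_vadd]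
    simp only [Prod.smul_fst, Prod.smul_snd, smul_eq_mul, vadd_eq_add]
    ring
  · intro h
    simp only [det3] at h
    set x : ℝ × ℝ := q - p with hx
    set y : ℝ × ℝ := r - p with hy
    have hq : q = x + p := by simp [hx]
    have hr : r = y + p := by simp [hy]
    have hdet : x.1 * y.2 = x.2 * y.1 := by
      simp only [hx, hy, Prod.fst_sub, Prod.snd_sub]; linarith
    by_cases hx0 : x = 0
    · refine ⟨y, ?_⟩
      intro z hz
      rcases hz with rfl | rfl | rfl
      · exact ⟨0, by simp⟩
      · exact ⟨0, by simp [hq, hx0]⟩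
      · exact ⟨1, by simpa using hr⟩
    · have hxy : ∃ c : ℝ, c • x = y := by
        by_cases h1 : x.1 = 0
        · have h2 : x.2 ≠ 0 := fun h2 => hx0 (Prod.ext h1 h2)
          refine ⟨y.2 / x.2, ?_⟩
          have hy1 : y.1 = 0 := by
            rw [h1] at hdet; simp at hdet
            rcases hdet with h' | h'
            · exact absurd h' h2
            · exact h'
          ext
          · simp [smul_eq_mul, h1, hy1]
          · simp [smul_eq_mul]; field_simp
        · refine ⟨y.1 / x.1, ?_⟩
          ext
          · simp [smul_eq_mul]; field_simp
          · simp [smul_eq_mul]; field_simp; linarith [hdet]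
      obtain ⟨c, hc⟩ := hxy
      refine ⟨x, ?_⟩
      intro z hz
      rcases hz with rfl | rfl | rfl
      · exact ⟨0, by simp⟩
      · exact ⟨1, by simpa using hq⟩
      · exact ⟨c, by rw [hr, ← hc]; simp⟩

theorem det3_continuous : Continuous det3 := by
  unfold det3; fun_prop

theorem det3_stable (t : (ℝ × ℝ) × (ℝ × ℝ) × (ℝ × ℝ)) (h : det3 t ≠ 0) :
    ∃ δ : ℝ, 0 < δ ∧ ∀ x, dist x t < δ → det3 x ≠ 0 := by
  have hopen : IsOpen {x : (ℝ × ℝ) × (ℝ × ℝ) × (ℝ × ℝ) | det3 x ≠ 0} :=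
    isOpen_ne.preimage det3_continuous
  obtain ⟨δ, hδ, hball⟩ := Metric.isOpen_iff.mp hopen t h
  exact ⟨δ, hδ, fun x hx => hball (Metric.mem_ball.mpr hx)⟩

/-- For every finite point set `P` in the plane there is an `ε > 0` such that the open
`ε`-discs around the points are pairwise disjoint, and whenever a single line meets the
three discs centred at `u, v, w ∈ P`, the points `u, v, w` are collinear. -/
theorem exists_eps_discs (P : Set (ℝ × ℝ)) (hP : P.Finite) :
    ∃ ε : ℝ, 0 < ε ∧
      (∀ u ∈ P, ∀ v ∈ P, u ≠ v → Disjoint (Metric.ball u ε) (Metric.ball v ε)) ∧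
      ∀ u ∈ P, ∀ v ∈ P, ∀ w ∈ P,
        (∃ p q r : ℝ × ℝ, Collinear ℝ ({p, q, r} : Set (ℝ × ℝ)) ∧
          p ∈ Metric.ball u ε ∧ q ∈ Metric.ball v ε ∧ r ∈ Metric.ball w ε) →
        Collinear ℝ ({u, v, w} : Set (ℝ × ℝ)) := by
  classical
  set F : Finset (ℝ × ℝ) := hP.toFinset with hF
  set g : (ℝ × ℝ) × (ℝ × ℝ) × (ℝ × ℝ) → ℝ :=
    fun t => if h : det3 t ≠ 0 then (det3_stable t h).choose else 1 with hg
  have hgpos : ∀ t, 0 < g t := by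
    intro t
    by_cases h : det3 t ≠ 0
    · simp only [hg, dif_pos h]; exact (det3_stable t h).choose_spec.1
    · push_neg at h
      simp [hg, h]
  have hgprop : ∀ t x, det3 t ≠ 0 → dist x t < g t → det3 x ≠ 0 := by
    intro t x h hx
    simp only [hg, dif_pos h] at hx
    exact (det3_stable t h).choose_spec.2 x hx
  set g2 : (ℝ × ℝ) × (ℝ × ℝ) → ℝ := fun s => if s.1 = s.2 then 1 else dist s.1 s.2 / 2 with hg2
  have hg2pos : ∀ s, 0 < g2 s := by
    intro s
    by_cases h : s.1 = s.2
    · simp [hg2, h]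
    · simp only [hg2, if_neg h]
      have := dist_pos.mpr h
      linarith
  set E : Finset ℝ :=
    insert 1 (((F ×ˢ F ×ˢ F).image g) ∪ ((F ×ˢ F).image g2)) with hE
  have hEne : E.Nonempty := ⟨1, Finset.mem_insert_self 1 _⟩
  set ε : ℝ := E.min' hEne with hε
  have hεpos : 0 < ε := by
    rw [hε, Finset.lt_min'_iff]
    intro b hb
    rw [hE] at hb
    rcases Finset.mem_insert.mp hb with rfl | hb
    · exact one_pos
    rcases Finset.mem_union.mp hb with hb | hb
    · obtain ⟨t, _, rfl⟩ := Finset.mem_image.mp hb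
      exact hgpos t
    · obtain ⟨s, _, rfl⟩ := Finset.mem_image.mp hb
      exact hg2pos s
  refine ⟨ε, hεpos, ?_, ?_⟩
  · intro u hu v hv huv
    have hmemF : ∀ x ∈ P, x ∈ F := fun x hx => hP.mem_toFinset.mpr hx
    have hle : ε ≤ g2 (u, v) := by
      apply Finset.min'_le
      rw [hE]
      exact Finset.mem_insert_of_mem (Finset.mem_union_right _
        (Finset.mem_image_of_mem g2 (Finset.mem_product.mpr ⟨hmemF u hu, hmemF v hv⟩)))
    have : g2 (u, v) = dist u v / 2 := by simp [hg2, huv]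
    apply Metric.ball_disjoint_ball
    rw [this] at hle
    linarith
  · intro u hu v hv w hw ⟨p, q, r, hcol, hp, hq, hr⟩
    by_contra hncol
    have hmemF : ∀ x ∈ P, x ∈ F := fun x hx => hP.mem_toFinset.mpr hx
    have hdet : det3 (u, v, w) ≠ 0 := fun h => hncol ((collinear_iff_det3 u v w).mpr h)
    have hle : ε ≤ g (u, v, w) := by
      apply Finset.min'_le
      rw [hE]
      refine Finset.mem_insert_of_mem (Finset.mem_union_left _
        (Finset.mem_image_of_mem g ?_))
      exact Finset.mem_product.mpr ⟨hmemF u hu,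
        Finset.mem_product.mpr ⟨hmemF v hv, hmemF w hw⟩⟩
    have hdist : dist ((p, q, r) : (ℝ × ℝ) × (ℝ × ℝ) × (ℝ × ℝ)) (u, v, w) < g (u, v, w) := by
      rw [Prod.dist_eq, Prod.dist_eq]
      refine lt_of_lt_of_le (max_lt (Metric.mem_ball.mp hp)
        (max_lt (Metric.mem_ball.mp hq) (Metric.mem_ball.mp hr))) hle
    exact hgprop (u, v, w) (p, q, r) hdet hdist ((collinear_iff_det3 p q r).mp hcol)
end
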